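/- SubGaussianity of the clipped logit of a binomial proportion (Lemma F.2): Fix β ∈ (1/2, 1). There exists a constant C > 0 depending only on β (the paper gives C = (6√(2e)·(3√(log 2)+1))²·3/(2(1−β)^4)) such that for every n ∈ ℕ with n ≥ 1, every p ∈ [1−β, β], Y_n ~ Binomial(n, p) and X_n = Y_n/n, the random variable f(X_n) is subGaussian with variance proxy at most C/n; that is, E[exp(t·(f(X_n) − E[f(X_n)]))] ≤ exp((C/n)·t²/2) for all t ∈ ℝ. -/

import Mathlib

open MeasureTheory ProbabilityTheory

/-- The clipped logit function `f` of Lemma F.1: `f(x) = log(x/(1−x))` on `(1−β, β)`,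
clamped to its boundary values outside. -/
noncomputable def flog (β x : ℝ) : ℝ :=
  if x ≤ 1 - β then Real.log ((1 - β) / β)
  else if β ≤ x then Real.log (β / (1 - β))
  else Real.log (x / (1 - x))

/-- `Y` has the binomial law with `m` trials and success probability `p` under `P`. -/
def HasBinomialLaw {Ω : Type*} [MeasurableSpace Ω] (P : Measure Ω)
    (Y : Ω → ℕ) (m : ℕ) (p : ℝ) : Prop :=
  ∀ t : ℕ, P {ω | Y ω = t} =
    ENNReal.ofReal ((m.choose t : ℝ) * p ^ t * (1 - p) ^ (m - t))

/-!
Write `Bin(n + 1, p)` as `Bin(n, p)` followed by one Bernoulli step. If `F : ℕ → ℝ` has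
increments bounded by `c`, averaging out that last step replaces `F` by
`G k = p F(k + 1) + (1 - p) F k`, whose increments are again bounded by `c`, and the conditional
mgf of `F - G` over the step is at most `exp ((c / 2) ^ 2 t ^ 2 / 2)` by Hoeffding's lemma.
Induction on `n` (a discrete Azuma argument) makes `F(Y) - E F(Y)` sub-Gaussian with variance
proxy `n (c / 2) ^ 2`. The clipped logit is `2 / (1 - β)`-Lipschitz, being the logit composed
with the projection onto `[1 - β, β]`, so `k ↦ flog β (k / n)` has increments at most
`2 / ((1 - β) n)`, which gives the theorem with `C = 1 / (1 - β) ^ 2`.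
-/

open Real Set unitInterval

lemma bernoulli_centered_mgf_le (p : I) (x y t : ℝ) :
    p * exp (t * (x - (p * x + (1 - p) * y))) + (1 - p) * exp (t * (y - (p * x + (1 - p) * y)))
      ≤ exp (((x - y) / 2) ^ 2 * t ^ 2 / 2) := by
  set m := p * x + (1 - p) * y
  have hbound : ∀ᵐ z ∂Ber(x - m, y - m, p),
      id z ∈ Icc (min (x - m) (y - m)) (max (x - m) (y - m)) := by
    rw [ae_iff]
    exact bernoulliMeasure_apply_of_notMem_of_notMem p
      (measurableSet_Icc.compl.preimage measurable_id) (by simp) (by simp)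
  have hmean : ∫ z, id z ∂Ber(x - m, y - m, p) = 0 := by
    rw [integral_bernoulliMeasure]; simp only [id, smul_eq_mul, m]; ring
  have hoeffding :=
    (hasSubgaussianMGF_of_mem_Icc_of_integral_eq_zero aemeasurable_id hbound hmean).mgf_le t
  rw [mgf, integral_bernoulliMeasure] at hoeffding
  simp only [id, smul_eq_mul, NNReal.coe_pow, NNReal.coe_div, coe_nnnorm, max_sub_min_eq_abs,
    Real.norm_eq_abs, abs_abs] at hoeffding
  refine hoeffding.trans_eq ?_
  congr 2
  rw [div_pow, sq_abs, div_pow]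
  push_cast
  ring

lemma binomial_real_singleton_succ (n k : ℕ) (p : I) :
    Bin(n + 1, p).real {k + 1} = p * Bin(n, p).real {k} + (1 - p) * Bin(n, p).real {k + 1} := by
  simp only [binomial_real_singleton, Nat.choose_succ_succ', Nat.cast_add]
  rcases lt_or_ge k n with hk | hk
  · obtain ⟨m, rfl⟩ := Nat.exists_eq_add_of_lt hk
    rw [show k + m + 1 + 1 - (k + 1) = m + 1 by omega, show k + m + 1 - k = m + 1 by omega,
      show k + m + 1 - (k + 1) = m by omega]
    ring
  · rw [Nat.choose_eq_zero_of_lt (by omega : n < k + 1), show n + 1 - (k + 1) = n - k by omega]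
    ring

lemma integral_binomial_succ (n : ℕ) (p : I) (h : ℕ → ℝ) :
    ∫ k, h k ∂Bin(n + 1, p) = ∫ k, (p * h (k + 1) + (1 - p) * h k) ∂Bin(n, p) := by
  simp only [integral_binomial, ← binomial_real_singleton, ← Nat.range_succ_eq_Iic, smul_eq_mul]
  have hshift : ∑ k ∈ Finset.range (n + 1), Bin(n, p).real {k} * h k =
      ∑ k ∈ Finset.range (n + 1), Bin(n, p).real {k + 1} * h (k + 1) +
        Bin(n, p).real {0} * h 0 := by
    have hlast : Bin(n, p).real {n + 1} = 0 := by simp [binomial_real_singleton]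
    simpa [Finset.sum_range_succ, hlast] using
      Finset.sum_range_succ' (fun k => Bin(n, p).real {k} * h k) (n + 1)
  have hpascal : ∑ k ∈ Finset.range (n + 1), Bin(n + 1, p).real {k + 1} * h (k + 1) =
      p * ∑ k ∈ Finset.range (n + 1), Bin(n, p).real {k} * h (k + 1) +
        (1 - p) * ∑ k ∈ Finset.range (n + 1), Bin(n, p).real {k + 1} * h (k + 1) := by
    rw [Finset.mul_sum, Finset.mul_sum, ← Finset.sum_add_distrib]
    exact Finset.sum_congr rfl fun k _ => by rw [binomial_real_singleton_succ]; ring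
  have hsplit :
      ∑ k ∈ Finset.range (n + 1), Bin(n, p).real {k} * (p * h (k + 1) + (1 - p) * h k) =
      p * ∑ k ∈ Finset.range (n + 1), Bin(n, p).real {k} * h (k + 1) +
        (1 - p) * ∑ k ∈ Finset.range (n + 1), Bin(n, p).real {k} * h k := by
    rw [Finset.mul_sum, Finset.mul_sum, ← Finset.sum_add_distrib]
    exact Finset.sum_congr rfl fun k _ => by ring
  rw [Finset.sum_range_succ', hpascal, hsplit, hshift, binomial_real_zero, binomial_real_zero]
  ring

lemma mgf_binomial_sub_integral_le {F : ℕ → ℝ} {c : ℝ} (hF : ∀ k, |F (k + 1) - F k| ≤ c)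
    (p : I) (n : ℕ) (t : ℝ) :
    mgf (fun k => F k - ∫ j, F j ∂Bin(n, p)) Bin(n, p) t ≤
      exp (n * (c / 2) ^ 2 * t ^ 2 / 2) := by
  induction n generalizing F with
  | zero => simp [binomial_zero, mgf]
  | succ n ih =>
    set G : ℕ → ℝ := fun k => p * F (k + 1) + (1 - p) * F k
    have hG : ∀ k, |G (k + 1) - G k| ≤ c := fun k => calc
      |G (k + 1) - G k| = |p * (F (k + 1 + 1) - F (k + 1)) + (1 - p) * (F (k + 1) - F k)| := by
        simp only [G]; ring_nf
      _ ≤ p * c + (1 - p) * c := by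
        refine (abs_add_le _ _).trans ?_
        rw [abs_mul, abs_mul, abs_of_nonneg (nonneg p), abs_of_nonneg (one_minus_nonneg p)]
        exact add_le_add (mul_le_mul_of_nonneg_left (hF _) (nonneg p))
          (mul_le_mul_of_nonneg_left (hF _) (one_minus_nonneg p))
      _ = c := by ring
    set m := ∫ k, G k ∂Bin(n, p)
    have hstep : ∀ k, p * exp (t * (F (k + 1) - m)) + (1 - p) * exp (t * (F k - m)) ≤
        exp ((c / 2) ^ 2 * t ^ 2 / 2) * exp (t * (G k - m)) := fun k => calc
      _ = (p * exp (t * (F (k + 1) - G k)) + (1 - p) * exp (t * (F k - G k))) *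
          exp (t * (G k - m)) := by
        rw [add_mul, mul_assoc, mul_assoc, ← exp_add, ← exp_add]; ring_nf
      _ ≤ exp (((F (k + 1) - F k) / 2) ^ 2 * t ^ 2 / 2) * exp (t * (G k - m)) := by
        gcongr; exact bernoulli_centered_mgf_le p _ _ t
      _ ≤ _ := by
        gcongr exp (?_ * _ / _) * _
        rw [div_pow, div_pow, ← sq_abs]
        gcongr
        exact hF k
    calc mgf (fun k => F k - ∫ j, F j ∂Bin(n + 1, p)) Bin(n + 1, p) t
        = ∫ k, (p * exp (t * (F (k + 1) - m)) + (1 - p) * exp (t * (F k - m))) ∂Bin(n, p) := by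
          rw [mgf, integral_binomial_succ n p F, integral_binomial_succ]
      _ ≤ ∫ k, exp ((c / 2) ^ 2 * t ^ 2 / 2) * exp (t * (G k - m)) ∂Bin(n, p) :=
          integral_mono (integrable_binomial _) (integrable_binomial _) hstep
      _ = exp ((c / 2) ^ 2 * t ^ 2 / 2) * mgf (fun k => G k - m) Bin(n, p) t :=
          integral_const_mul _ _
      _ ≤ exp ((c / 2) ^ 2 * t ^ 2 / 2) * exp (n * (c / 2) ^ 2 * t ^ 2 / 2) := by
          gcongr; exact ih hG
      _ = exp ((n + 1 : ℕ) * (c / 2) ^ 2 * t ^ 2 / 2) := by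
          rw [← exp_add]; push_cast; ring_nf

lemma flog_eq_log_projIcc {β : ℝ} (h : 1 - β ≤ β) (x : ℝ) :
    flog β x = log (projIcc (1 - β) β h x / (1 - projIcc (1 - β) β h x)) := by
  unfold flog
  split_ifs with h₁ h₂
  · rw [projIcc_of_le_left h h₁]; ring_nf
  · rw [projIcc_of_right_le h h₂]
  · rw [projIcc_of_mem h ⟨(not_le.1 h₁).le, (not_le.1 h₂).le⟩]

lemma abs_log_div_one_sub_sub_le {a x y : ℝ} (ha : 0 < a) (hx : x ∈ Icc a (1 - a))
    (hy : y ∈ Icc a (1 - a)) :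
    |log (x / (1 - x)) - log (y / (1 - y))| ≤ 2 / a * |x - y| := by
  have hpos : ∀ z ∈ Icc a (1 - a), 0 < z ∧ 0 < 1 - z := fun z hz => by
    constructor <;> linarith [hz.1, hz.2]
  have hderiv : ∀ z ∈ Icc a (1 - a), HasDerivWithinAt (fun z => log z - log (1 - z))
      (z⁻¹ + (1 - z)⁻¹) (Icc a (1 - a)) z := fun z hz => by
    have h := ((hasDerivAt_id' z).log (hpos z hz).1.ne').fun_sub
      (((hasDerivAt_id' z).const_sub 1).log (hpos z hz).2.ne')
    rw [show 1 / z - -1 / (1 - z) = z⁻¹ + (1 - z)⁻¹ by ring] at h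
    exact h.hasDerivWithinAt
  have hbound : ∀ z ∈ Icc a (1 - a), ‖z⁻¹ + (1 - z)⁻¹‖ ≤ 2 / a := fun z hz => by
    obtain ⟨hz0, hz1⟩ := hpos z hz
    rw [Real.norm_of_nonneg (by positivity)]
    calc z⁻¹ + (1 - z)⁻¹ ≤ a⁻¹ + a⁻¹ :=
          add_le_add (inv_anti₀ ha hz.1) (inv_anti₀ ha (by linarith [hz.2]))
      _ = 2 / a := by ring
  have := (convex_Icc a (1 - a)).norm_image_sub_le_of_norm_hasDerivWithin_le hderiv hbound hy hx
  obtain ⟨hx0, hx1⟩ := hpos x hx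
  obtain ⟨hy0, hy1⟩ := hpos y hy
  rwa [log_div hx0.ne' hx1.ne', log_div hy0.ne' hy1.ne']

lemma abs_flog_sub_flog_le {β : ℝ} (h₁ : 1 / 2 ≤ β) (h₂ : β < 1) (x y : ℝ) :
    |flog β x - flog β y| ≤ 2 / (1 - β) * |x - y| := by
  have h : 1 - β ≤ β := by linarith
  have hmem (z : ℝ) : (projIcc (1 - β) β h z : ℝ) ∈ Icc (1 - β) (1 - (1 - β)) := by simp
  rw [flog_eq_log_projIcc h, flog_eq_log_projIcc h]
  calc _ ≤ 2 / (1 - β) * |(projIcc (1 - β) β h x : ℝ) - projIcc (1 - β) β h y| :=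
        abs_log_div_one_sub_sub_le (by linarith) (hmem x) (hmem y)
    _ ≤ 2 / (1 - β) * |x - y| :=
        mul_le_mul_of_nonneg_left (abs_projIcc_sub_projIcc h) (div_nonneg zero_le_two (by linarith))

lemma HasBinomialLaw.hasLaw {Ω : Type*} [MeasurableSpace Ω] {P : Measure Ω} {Y : Ω → ℕ}
    {n : ℕ} {p : I} (hY : Measurable Y) (h : HasBinomialLaw P Y n p) : HasLaw Y Bin(n, p) P where
  map_eq := Measure.ext_of_singleton fun k => by
    rw [Measure.map_apply hY (measurableSet_singleton k), binomial_singleton]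
    exact h k

/-- **Lemma F.2 (SubGaussianity of the clipped logit of a binomial proportion).**
Fix `β ∈ (1/2, 1)`. There is a constant `C > 0` depending only on `β` such that for
every `n ≥ 1`, `p ∈ [1−β, β]`, and `Y_n ~ Binomial(n, p)` with `X_n = Y_n/n`, the
random variable `f(X_n)` is subGaussian with variance proxy at most `C/n`. -/
theorem binomial_clipped_logit_subgaussian (β : ℝ) (hβ : β ∈ Set.Ioo (1 / 2 : ℝ) 1) :
    ∃ C : ℝ, 0 < C ∧
      ∀ (n : ℕ), 1 ≤ n → ∀ p : ℝ, p ∈ Set.Icc (1 - β) β →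
      ∀ (Ω : Type) [MeasurableSpace Ω] (P : Measure Ω),
        IsProbabilityMeasure P →
      ∀ Y : Ω → ℕ, Measurable Y → HasBinomialLaw P Y n p →
      ∀ t : ℝ,
        (∫ ω, Real.exp (t * (flog β ((Y ω : ℝ) / n) -
          ∫ ω', flog β ((Y ω' : ℝ) / n) ∂P)) ∂P) ≤
          Real.exp ((C / n) * t ^ 2 / 2) := by
  obtain ⟨hβ₁, hβ₂⟩ := hβ
  have hβ₀ : 0 < 1 - β := by linarith
  refine ⟨1 / (1 - β) ^ 2, by positivity, ?_⟩
  intro n hn p hp Ω _ P _ Y hY hbin t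
  let q : I := ⟨p, by linarith [hp.1], by linarith [hp.2]⟩
  have hlaw : HasLaw Y Bin(n, q) P := HasBinomialLaw.hasLaw hY hbin
  set F : ℕ → ℝ := fun k => flog β (k / n)
  have hF : ∀ k, |F (k + 1) - F k| ≤ 2 / (1 - β) / n := fun k => by
    refine (abs_flog_sub_flog_le hβ₁.le hβ₂ ((k + 1 : ℕ) / n) (k / n)).trans_eq ?_
    rw [← sub_div, Nat.cast_succ, add_sub_cancel_left, abs_div, abs_one, Nat.abs_cast]
    ring
  have hmean : ∫ ω, flog β (Y ω / n) ∂P = ∫ k, F k ∂Bin(n, q) :=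
    hlaw.integral_comp (f := F) .of_discrete
  rw [hmean]
  calc _ = mgf (fun k => F k - ∫ j, F j ∂Bin(n, q)) Bin(n, q) t :=
        hlaw.integral_comp .of_discrete
    _ ≤ exp (n * (2 / (1 - β) / n / 2) ^ 2 * t ^ 2 / 2) := mgf_binomial_sub_integral_le hF q n t
    _ = _ := by
      have hn' : (n : ℝ) ≠ 0 := by positivity
      field_simp
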